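/- Let L: D → D be a trace-preserving completely positive map on density operators of a finite-dimensional Hilbert space of the form L(ρ) = Σ_j (1 ⊗ B_j) ρ (1 ⊗ B_j)†, acting trivially on the first tensor factor. If the induced map on the second factor has a unique fixed point ρ_fix with all other eigenvalues of modulus strictly less than 1, then for any initial state ρ on the tensor product, lim_{L→∞} L^L(ρ) = σ ⊗ ρ_fix where σ = Tr_2(ρ) is the partial trace over the second factor. -/

import Mathlib

/-!
On each block `ρ_ab = (ρ (a, i) (b, i'))_{i,i'}` the channel with Kraus operators `1 ⊗ B_j` acts
as the channel `L₂`, so it suffices to show `L₂ⁿ x → tr x • ρ_fix`. With `P x = tr x • ρ_fix`,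
trace preservation and `L₂ ρ_fix = ρ_fix` give `L₂ⁿ x = P x + (L₂ - P)ⁿ (x - P x)`. An
eigenvector of `L₂ - P` with nonzero eigenvalue is traceless, hence an eigenvector of `L₂`; for
the eigenvalue 1 it would be a traceless multiple of `ρ_fix`. So the spectrum of `L₂ - P` lies
in the open unit disc, and by Gelfand's formula its powers tend to zero.
-/

open Finset Kronecker ComplexOrder
open Filter Topology NNReal

theorem tendsto_pow_atTop_nhds_zero_of_forall_spectrum_norm_lt_one {A : Type*} [NormedRing A]
    [NormedAlgebra ℂ A] [CompleteSpace A] {a : A} (ha : ∀ z ∈ spectrum ℂ a, ‖z‖ < 1) :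
    Tendsto (a ^ ·) atTop (𝓝 0) := by
  nontriviality A
  obtain ⟨c, hac, hc1⟩ : ∃ c : ℝ≥0, spectralRadius ℂ a < c ∧ c < 1 := by
    obtain ⟨c, hac, hc1⟩ := ENNReal.lt_iff_exists_nnreal_btwn.mp
      (spectrum.spectralRadius_lt_of_forall_lt a (r := 1) fun z hz => by
        exact_mod_cast ha z hz)
    exact ⟨c, hac, by exact_mod_cast hc1⟩
  have hbound : ∀ᶠ n : ℕ in atTop, ‖a ^ n‖ ≤ c ^ n := by
    have hgelfand := spectrum.pow_nnnorm_pow_one_div_tendsto_nhds_spectralRadius a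
    filter_upwards [hgelfand.eventually_lt_const hac, eventually_gt_atTop 0] with n hn hn0
    rw [one_div, ← ENNReal.coe_rpow_of_nonneg _ (by positivity), ENNReal.coe_lt_coe,
      NNReal.rpow_inv_lt_iff (by positivity), NNReal.rpow_natCast] at hn
    exact_mod_cast hn.le
  exact squeeze_zero_norm' hbound (tendsto_pow_atTop_nhds_zero_of_lt_one c.2 hc1)

namespace Module.End

section Algebraic

variable {E : Type*} [AddCommGroup E] [Module ℂ E] {T : End ℂ E} {φ : E →ₗ[ℂ] ℂ} {v : E}

theorem eigenspace_one_le_span_of_finrank_maxGenEigenspace_eq_one [FiniteDimensional ℂ E]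
    (hTv : T v = v) (hv : v ≠ 0) (hsimple : finrank ℂ (T.maxGenEigenspace 1) = 1) :
    T.eigenspace 1 ≤ ℂ ∙ v := by
  have hvmem : v ∈ T.maxGenEigenspace 1 :=
    eigenspace_le_maxGenEigenspace (mem_eigenspace_iff.mpr (by simpa using hTv))
  have hspan : (ℂ ∙ v) = T.maxGenEigenspace 1 :=
    Submodule.eq_of_le_of_finrank_le ((Submodule.span_singleton_le_iff_mem _ _).mpr hvmem)
      (by rw [hsimple, finrank_span_singleton hv])
  exact hspan ▸ eigenspace_le_maxGenEigenspace

theorem norm_lt_one_of_hasEigenvalue_sub_smulRight (hφT : ∀ x, φ (T x) = φ x) (hφv : φ v = 1)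
    (hker : T.eigenspace 1 ≤ ℂ ∙ v) (heig : ∀ μ, T.HasEigenvalue μ → μ = 1 ∨ ‖μ‖ < 1) {μ : ℂ}
    (hμ : (T - φ.smulRight v).HasEigenvalue μ) : ‖μ‖ < 1 := by
  rcases eq_or_ne μ 0 with rfl | hμ0
  · simp
  obtain ⟨w, hw, hw0⟩ := hμ.exists_hasEigenvector
  have hSw : T w - φ w • v = μ • w := by simpa using mem_eigenspace_iff.mp hw
  have hφw : φ w = 0 := by simpa [hφT, hφv, hμ0] using congrArg φ hSw
  have hTw : T w = μ • w := by simpa [hφw] using hSw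
  rcases heig μ (hasEigenvalue_of_hasEigenvector ⟨mem_eigenspace_iff.mpr hTw, hw0⟩) with rfl | h
  · obtain ⟨c, rfl⟩ := Submodule.mem_span_singleton.mp (hker (mem_eigenspace_iff.mpr hTw))
    rw [map_smul, hφv, smul_eq_mul, mul_one] at hφw
    simp [hφw] at hw0
  · exact h

theorem pow_sub_smulRight_apply_of_map_eq_zero (hφT : ∀ x, φ (T x) = φ x) {y : E}
    (hy : φ y = 0) (n : ℕ) : ((T - φ.smulRight v) ^ n) y = (T ^ n) y := by
  induction n generalizing y with
  | zero => rfl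
  | succ n ih =>
    have hSy : (T - φ.smulRight v) y = T y := by simp [hy]
    rw [pow_succ, mul_apply, hSy, ih (by rwa [hφT]), ← mul_apply, ← pow_succ]

end Algebraic

variable {E : Type*} [NormedAddCommGroup E] [NormedSpace ℂ E] [FiniteDimensional ℂ E]
  {T : End ℂ E}

theorem tendsto_pow_apply_atTop_nhds_zero (hT : ∀ μ, T.HasEigenvalue μ → ‖μ‖ < 1) (x : E) :
    Tendsto (fun n => (T ^ n) x) atTop (𝓝 0) := by
  set a := toContinuousLinearMap E T
  have ha : Tendsto (a ^ ·) atTop (𝓝 0) :=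
    tendsto_pow_atTop_nhds_zero_of_forall_spectrum_norm_lt_one fun z hz =>
      hT z (hasEigenvalue_iff_mem_spectrum.mpr (by rwa [AlgEquiv.spectrum_eq] at hz))
  refine squeeze_zero_norm (fun n => ?_) (by simpa using ha.norm.mul_const ‖x‖)
  calc ‖(T ^ n) x‖ = ‖(a ^ n) x‖ := by rw [← map_pow]; rfl
    _ ≤ ‖a ^ n‖ * ‖x‖ := (a ^ n).le_opNorm x

theorem tendsto_pow_apply_of_finrank_maxGenEigenspace_eq_one {φ : E →ₗ[ℂ] ℂ} {v : E}
    (hφT : ∀ x, φ (T x) = φ x) (hTv : T v = v) (hφv : φ v = 1)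
    (hsimple : finrank ℂ (T.maxGenEigenspace 1) = 1)
    (heig : ∀ μ, T.HasEigenvalue μ → μ = 1 ∨ ‖μ‖ < 1) (x : E) :
    Tendsto (fun n => (T ^ n) x) atTop (𝓝 (φ x • v)) := by
  have hv : v ≠ 0 := by rintro rfl; simp at hφv
  have hker := eigenspace_one_le_span_of_finrank_maxGenEigenspace_eq_one hTv hv hsimple
  set y := x - φ x • v
  have hy : φ y = 0 := by simp [y, hφv]
  have hsplit (n : ℕ) : (T ^ n) x = φ x • v + ((T - φ.smulRight v) ^ n) y := by
    rw [pow_sub_smulRight_apply_of_map_eq_zero hφT hy, map_sub, map_smul, pow_apply T n v,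
      Function.iterate_fixed hTv]
    abel
  simp_rw [hsplit]
  simpa using tendsto_const_nhds.add (tendsto_pow_apply_atTop_nhds_zero
    (fun μ => norm_lt_one_of_hasEigenvalue_sub_smulRight hφT hφv hker heig) y)

end Module.End

namespace Matrix

variable {ι l n n' p p' α : Type*}

theorem submatrix_sum {m o : Type*} [AddCommMonoid α] (s : Finset ι) (f : ι → Matrix m o α)
    (r : l → m) (c : n → o) : (∑ i ∈ s, f i).submatrix r c = ∑ i ∈ s, (f i).submatrix r c := by
  ext
  simp [sum_apply]

theorem trace_sum_mul_mul_star [Fintype ι] [Fintype n] [DecidableEq n] [CommSemiring α] [Star α]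
    {B : ι → Matrix n n α} (hB : ∑ j, star (B j) * B j = 1) (σ : Matrix n n α) :
    trace (∑ j, B j * σ * star (B j)) = trace σ := by
  simp_rw [trace_sum, trace_mul_cycle _ σ, ← trace_sum, ← sum_mul, hB, one_mul]

theorem submatrix_prodMk_one_kronecker_mul_mul_one_kronecker [Fintype l] [DecidableEq l]
    [Fintype n'] [Fintype p'] [Semiring α] (B : Matrix n n' α) (σ : Matrix (l × n') (l × p') α)
    (C : Matrix p' p α) (a b : l) :
    (((1 : Matrix l l α) ⊗ₖ B) * σ * ((1 : Matrix l l α) ⊗ₖ C)).submatrix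
        (Prod.mk a) (Prod.mk b) =
      B * σ.submatrix (Prod.mk a) (Prod.mk b) * C := by
  ext i k
  simp [mul_apply, Fintype.sum_prod_type, one_apply, ite_mul, mul_ite]

theorem submatrix_prodMk_sum_one_kronecker_mul_mul_star [Fintype ι] [Fintype l] [DecidableEq l]
    [Fintype n] [CommSemiring α] [StarRing α] (B : ι → Matrix n n α)
    (σ : Matrix (l × n) (l × n) α) (a b : l) :
    (∑ j, ((1 : Matrix l l α) ⊗ₖ B j) * σ * star ((1 : Matrix l l α) ⊗ₖ B j)).submatrix
        (Prod.mk a) (Prod.mk b) =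
      ∑ j, B j * σ.submatrix (Prod.mk a) (Prod.mk b) * star (B j) := by
  simp [submatrix_sum, star_eq_conjTranspose, conjTranspose_kronecker,
    submatrix_prodMk_one_kronecker_mul_mul_one_kronecker]

theorem submatrix_prodMk_kronecker [Mul α] (A : Matrix l p α) (C : Matrix n n' α) (a : l) (b : p) :
    (A ⊗ₖ C).submatrix (Prod.mk a) (Prod.mk b) = A a b • C := by
  ext i j
  simp [kroneckerMap_apply]

theorem tendsto_of_forall_tendsto_submatrix_prodMk [TopologicalSpace α] {F : Filter ι}
    {f : ι → Matrix (l × n) (p × n') α} {M : Matrix (l × n) (p × n') α}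
    (h : ∀ a b, Tendsto (fun k => (f k).submatrix (Prod.mk a) (Prod.mk b)) F
      (𝓝 (M.submatrix (Prod.mk a) (Prod.mk b)))) :
    Tendsto f F (𝓝 M) :=
  tendsto_pi_nhds.mpr fun ⟨a, i⟩ => tendsto_pi_nhds.mpr fun ⟨b, j⟩ =>
    tendsto_pi_nhds.mp (tendsto_pi_nhds.mp (h a b) i) j

end Matrix

theorem stmt19_general (d1 d2 J : ℕ)
    (B : Fin J → Matrix (Fin d2) (Fin d2) ℂ)
    (htp : ∑ j : Fin J, star (B j) * B j = 1)
    (ρfix : Matrix (Fin d2) (Fin d2) ℂ)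
    (htr : ρfix.trace = 1)
    (hfix : ∑ j : Fin J, B j * ρfix * star (B j) = ρfix)
    (L2 : Module.End ℂ (Matrix (Fin d2) (Fin d2) ℂ))
    (hL2 : ∀ σ : Matrix (Fin d2) (Fin d2) ℂ, L2 σ = ∑ j : Fin J, B j * σ * star (B j))
    (heig : ∀ μ : ℂ, Module.End.HasEigenvalue L2 μ → μ = 1 ∨ ‖μ‖ < 1)
    (hsimple : Module.finrank ℂ (L2.maxGenEigenspace 1) = 1) :
    ∀ ρ : Matrix (Fin d1 × Fin d2) (Fin d1 × Fin d2) ℂ,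
      Filter.Tendsto
        (fun k =>
          (fun σ : Matrix (Fin d1 × Fin d2) (Fin d1 × Fin d2) ℂ =>
            ∑ j : Fin J, ((1 : Matrix (Fin d1) (Fin d1) ℂ) ⊗ₖ B j) * σ *
              star ((1 : Matrix (Fin d1) (Fin d1) ℂ) ⊗ₖ B j))^[k] ρ)
        Filter.atTop
        (nhds ((Matrix.of fun a b : Fin d1 => ∑ i : Fin d2, ρ (a, i) (b, i)) ⊗ₖ ρfix)) := by
  intro ρ
  -- any norm will do: in finite dimension it induces the entrywise topology of the statement
  let _ := Matrix.normedAddCommGroup (n := Fin d2) (m := Fin d2) (α := ℂ)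
  let _ := Matrix.normedSpace (n := Fin d2) (m := Fin d2) (α := ℂ) (R := ℂ)
  set F := fun σ : Matrix (Fin d1 × Fin d2) (Fin d1 × Fin d2) ℂ =>
    ∑ j : Fin J, ((1 : Matrix (Fin d1) (Fin d1) ℂ) ⊗ₖ B j) * σ *
      star ((1 : Matrix (Fin d1) (Fin d1) ℂ) ⊗ₖ B j)
  have hblock (a b : Fin d1) (k : ℕ) : (F^[k] ρ).submatrix (Prod.mk a) (Prod.mk b) =
      (L2 ^ k) (ρ.submatrix (Prod.mk a) (Prod.mk b)) := by
    rw [Module.End.pow_apply]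
    refine Function.Semiconj.iterate_right (f := (·.submatrix (Prod.mk a) (Prod.mk b)))
      (fun σ => ?_) k ρ
    dsimp only [F]
    rw [hL2, Matrix.submatrix_prodMk_sum_one_kronecker_mul_mul_star]
  have htrace (σ : Matrix (Fin d2) (Fin d2) ℂ) : (L2 σ).trace = σ.trace := by
    rw [hL2, Matrix.trace_sum_mul_mul_star htp]
  refine Matrix.tendsto_of_forall_tendsto_submatrix_prodMk fun a b => ?_
  simp_rw [hblock, Matrix.submatrix_prodMk_kronecker]
  exact Module.End.tendsto_pow_apply_of_finrank_maxGenEigenspace_eq_one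
    (φ := Matrix.traceLinearMap _ ℂ ℂ) htrace (by rw [hL2, hfix]) htr hsimple heig _

/-- Let `L(ρ) = Σ_j (1 ⊗ B_j) ρ (1 ⊗ B_j)†` be a trace-preserving completely positive map
acting trivially on the first tensor factor. If the induced channel on the second factor,
`σ ↦ Σ_j B_j σ B_j†`, has a unique fixed density operator `ρ_fix` (1 a simple eigenvalue)
and all other eigenvalues of modulus strictly less than 1, then for any initial operator
`ρ` on the tensor product, `L^L(ρ) → Tr₂(ρ) ⊗ ρ_fix` as `L → ∞`. -/
theorem stmt19 (d1 d2 J : ℕ)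
    (B : Fin J → Matrix (Fin d2) (Fin d2) ℂ)
    (htp : ∑ j : Fin J, star (B j) * B j = 1)
    (ρfix : Matrix (Fin d2) (Fin d2) ℂ)
    (hpos : ρfix.PosSemidef) (htr : ρfix.trace = 1)
    (hfix : ∑ j : Fin J, B j * ρfix * star (B j) = ρfix)
    (L2 : Module.End ℂ (Matrix (Fin d2) (Fin d2) ℂ))
    (hL2 : ∀ σ : Matrix (Fin d2) (Fin d2) ℂ, L2 σ = ∑ j : Fin J, B j * σ * star (B j))
    (heig : ∀ μ : ℂ, Module.End.HasEigenvalue L2 μ → μ = 1 ∨ ‖μ‖ < 1)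
    (hsimple : Module.finrank ℂ (L2.maxGenEigenspace 1) = 1) :
    ∀ ρ : Matrix (Fin d1 × Fin d2) (Fin d1 × Fin d2) ℂ,
      Filter.Tendsto
        (fun k =>
          (fun σ : Matrix (Fin d1 × Fin d2) (Fin d1 × Fin d2) ℂ =>
            ∑ j : Fin J, ((1 : Matrix (Fin d1) (Fin d1) ℂ) ⊗ₖ B j) * σ *
              star ((1 : Matrix (Fin d1) (Fin d1) ℂ) ⊗ₖ B j))^[k] ρ)
        Filter.atTop
        (nhds ((Matrix.of fun a b : Fin d1 => ∑ i : Fin d2, ρ (a, i) (b, i)) ⊗ₖ ρfix)) :=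
  stmt19_general d1 d2 J B htp ρfix htr hfix L2 hL2 heig hsimple
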